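/- Let χ_1, …, χ_r ∈ ℤ^d (r ≥ 1) be ℚ-linearly independent. Let Λ_A ⊆ ℤ^d be the subgroup they generate, let Λ^A := (ℚ-span of {χ_1,…,χ_r}) ∩ ℤ^d be its saturation, and let m := [Λ^A : Λ_A] (a finite positive integer). Suppose Γ ⊆ ℤ^d is a subgroup with ℤ^d = Λ^A ⊕ Γ (i.e., Λ^A ∩ Γ = {0} and Λ^A + Γ = ℤ^d). Let Λ(A) ⊆ ℚ^d be the additive subgroup generated by Γ together with the vectors χ_i/m for 1 ≤ i ≤ r. Then ℤ^d ⊆ Λ(A) and the index of ℤ^d in Λ(A) equals m^{r−1}. -/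

import Mathlib

noncomputable section

/-- Coordinatewise inclusion of `ℤ^d` into `ℚ^d`. -/
def intCastHom (d : ℕ) : (Fin d → ℤ) →+ (Fin d → ℚ) :=
  (Int.castAddHom ℚ).compLeft (Fin d)

/-- The rational vector associated to an integer vector. -/
def Qv (d : ℕ) (v : Fin d → ℤ) : Fin d → ℚ := fun j => (v j : ℚ)

/-- The subgroup `Λ_A` of `ℤ^d` generated by the vectors `χ i`, `i ∈ A`. -/
def latSub (d : ℕ) (χ : ℕ → Fin d → ℤ) (A : Finset ℕ) : AddSubgroup (Fin d → ℤ) :=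
  AddSubgroup.closure ((fun i => χ i) '' (A : Set ℕ))

/-- The saturation `Λ^A = (ℚ-span of {χ i : i ∈ A}) ∩ ℤ^d`. -/
def satSub (d : ℕ) (χ : ℕ → Fin d → ℤ) (A : Finset ℕ) : AddSubgroup (Fin d → ℤ) :=
  ((Submodule.span ℚ ((fun i => Qv d (χ i)) '' (A : Set ℕ))).toAddSubgroup).comap
    (intCastHom d)

/-- The multiplicity `m(A) = [Λ^A : Λ_A]`. -/
def mult (d : ℕ) (χ : ℕ → Fin d → ℤ) (A : Finset ℕ) : ℕ :=
  (latSub d χ A).relIndex (satSub d χ A)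

/-- The subgroup `Λ_A ⊆ ℤ^d` generated by a family indexed by `Fin r`. -/
def latA (d r : ℕ) (χ : Fin r → Fin d → ℤ) : AddSubgroup (Fin d → ℤ) :=
  AddSubgroup.closure (Set.range χ)

/-- The saturation `Λ^A = (ℚ-span of {χ_1,…,χ_r}) ∩ ℤ^d`. -/
def satA (d r : ℕ) (χ : Fin r → Fin d → ℤ) : AddSubgroup (Fin d → ℤ) :=
  ((Submodule.span ℚ (Set.range (fun i => Qv d (χ i)))).toAddSubgroup).comap
    (intCastHom d)

/-- The multiplicity `m = [Λ^A : Λ_A]`. -/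
def multA (d r : ℕ) (χ : Fin r → Fin d → ℤ) : ℕ :=
  (latA d r χ).relIndex (satA d r χ)

/-- The lattice `Λ(A) ⊆ ℚ^d` generated by `Γ` together with the vectors `χ_i / m`. -/
def LamA (d r : ℕ) (χ : Fin r → Fin d → ℤ) (Γ : AddSubgroup (Fin d → ℤ)) :
    AddSubgroup (Fin d → ℚ) :=
  AddSubgroup.closure
    ((Qv d '' (Γ : Set (Fin d → ℤ))) ∪
      Set.range (fun i => ((multA d r χ : ℚ))⁻¹ • Qv d (χ i)))

/-- The standard lattice `ℤ^d` viewed as an additive subgroup of `ℚ^d`. -/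
def intLat (d : ℕ) : AddSubgroup (Fin d → ℚ) := (intCastHom d).range

namespace Stmt14Aux

open AddSubgroup Set

lemma qv_eq (d : ℕ) : Qv d = ⇑(intCastHom d) := rfl

lemma intCast_injective (d : ℕ) : Function.Injective (intCastHom d) := by
  intro x y h
  funext j
  have h' : ((x j : ℤ) : ℚ) = ((y j : ℤ) : ℚ) := congrFun h j
  exact_mod_cast h'

lemma relIndex_map_inj {G H : Type*} [AddCommGroup G] [AddCommGroup H]
    (f : G →+ H) (hf : Function.Injective f) (A B : AddSubgroup G) :
    (A.map f).relIndex (B.map f) = A.relIndex B := by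
  have h := AddSubgroup.relIndex_comap (H := A.map f) f B
  rw [AddSubgroup.comap_map_eq_self_of_injective hf] at h
  exact h.symm

/-- For a subgroup `H` of an ambient group which is free of rank `n` as a `ℤ`-module,
the index of `mH` in `H` is `m^n`. -/
lemma relIndex_smul_of_basis {G : Type*} [AddCommGroup G] (H : AddSubgroup G)
    {m n : ℕ} (hm : m ≠ 0) (b : Module.Basis (Fin n) ℤ (AddSubgroup.toIntSubmodule H)) :
    (H.map (DistribMulAction.toAddMonoidHom G ((m : ℤ)))).relIndex H = m ^ n := by
  classical
  set μ : G →+ G := DistribMulAction.toAddMonoidHom G ((m : ℤ)) with hμ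
  set K : AddSubgroup G := H.map μ with hK
  let j : (↥H) ≃+ (↥(AddSubgroup.toIntSubmodule H)) :=
    { toFun := fun x => ⟨x.1, x.2⟩
      invFun := fun x => ⟨x.1, x.2⟩
      left_inv := fun x => rfl
      right_inv := fun x => rfl
      map_add' := fun x y => rfl }
  let ψ : (Fin n → ℤ) →+ (Fin n → ZMod m) := (Int.castAddHom (ZMod m)).compLeft (Fin n)
  let φ : (↥H) →+ (Fin n → ZMod m) :=
    ψ.comp ((b.equivFun.toLinearMap.toAddMonoidHom).comp j.toAddMonoidHom)
  have hφ : ∀ x : ↥H, φ x = fun i => ((b.equivFun (j x) i : ℤ) : ZMod m) := fun x => rfl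
  have hsurj : Function.Surjective φ := by
    intro c
    choose z hz using fun i => ZMod.intCast_surjective (c i)
    refine ⟨j.symm (b.equivFun.symm z), ?_⟩
    funext i
    rw [hφ]
    simp only [AddEquiv.apply_symm_apply, LinearEquiv.apply_symm_apply]
    exact hz i
  have hker : φ.ker = K.addSubgroupOf H := by
    ext x
    constructor
    · intro hx
      have hdvd : ∀ i, (m : ℤ) ∣ b.equivFun (j x) i := by
        intro i
        have h0 := congrFun (AddMonoidHom.mem_ker.mp hx) i
        rw [hφ] at h0
        exact (ZMod.intCast_zmod_eq_zero_iff_dvd _ m).mp h0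
      set y : ↥(AddSubgroup.toIntSubmodule H) :=
        b.equivFun.symm (fun i => b.equivFun (j x) i / m) with hy
      have hmy : (m : ℤ) • y = j x := by
        apply b.equivFun.injective
        rw [map_smul]
        funext i
        simp only [hy, LinearEquiv.apply_symm_apply, Pi.smul_apply, smul_eq_mul]
        exact Int.mul_ediv_cancel' (hdvd i)
      refine AddSubgroup.mem_addSubgroupOf.mpr ?_
      refine AddSubgroup.mem_map.mpr ⟨y.1, y.2, ?_⟩
      have h1 : m • (y : G) = (x : G) := by have h1' := congrArg Subtype.val hmy; simp at h1'; exact h1'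
      show ((m : ℤ)) • (y : G) = (x : G)
      rw [natCast_zsmul]
      exact h1
    · intro hx
      obtain ⟨y, hy, hyx⟩ := AddSubgroup.mem_map.mp (AddSubgroup.mem_addSubgroupOf.mp hx)
      apply AddMonoidHom.mem_ker.mpr
      have hjx : j x = (m : ℤ) • (⟨y, hy⟩ : ↥(AddSubgroup.toIntSubmodule H)) := by
        apply Subtype.ext
        show (x : G) = (m : ℤ) • y
        rw [← hyx]
        rfl
      funext i
      rw [hφ, hjx, map_smul]
      show (((m : ℤ) * b.equivFun ⟨y, hy⟩ i : ℤ) : ZMod m) = 0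
      exact (ZMod.intCast_zmod_eq_zero_iff_dvd _ m).mpr ⟨_, rfl⟩
  show (K.addSubgroupOf H).index = m ^ n
  rw [← hker, AddSubgroup.index_eq_card,
    Nat.card_congr (QuotientAddGroup.quotientKerEquivOfSurjective φ hsurj).toEquiv,
    Nat.card_pi]
  simp [Nat.card_zmod]

section Main

variable (d r : ℕ) (χ : Fin r → Fin d → ℤ)

lemma latA_le_satA : latA d r χ ≤ satA d r χ := by
  rw [latA]
  refine (AddSubgroup.closure_le _).mpr ?_
  rintro _ ⟨i, rfl⟩
  show intCastHom d (χ i) ∈ (Submodule.span ℚ (Set.range fun i => Qv d (χ i))).toAddSubgroup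
  exact Submodule.subset_span ⟨i, rfl⟩

lemma exists_nsmul_mem (x : Fin d → ℤ) (hx : x ∈ satA d r χ) :
    ∃ N : ℕ, 0 < N ∧ N • x ∈ latA d r χ := by
  have hx' : intCastHom d x ∈ Submodule.span ℚ (Set.range fun i => Qv d (χ i)) := hx
  obtain ⟨c, hc⟩ := (Submodule.mem_span_range_iff_exists_fun ℚ).mp hx'
  set N : ℕ := ∏ i, (c i).den with hN
  have hNpos : 0 < N := Finset.prod_pos (fun i _ => (c i).pos)
  have hz : ∀ i, ∃ z : ℤ, (z : ℚ) = (N : ℚ) * c i := by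
    intro i
    have hdvd : ((c i).den : ℤ) ∣ (N : ℤ) :=
      Int.natCast_dvd_natCast.mpr (Finset.dvd_prod_of_mem _ (Finset.mem_univ i))
    obtain ⟨k, hk⟩ := hdvd
    refine ⟨(c i).num * k, ?_⟩
    have hden0 : ((c i).den : ℚ) ≠ 0 := by exact_mod_cast (c i).den_nz
    have hden : c i * ((c i).den : ℚ) = ((c i).num : ℚ) :=
      (eq_div_iff hden0).mp (Rat.num_div_den (c i)).symm
    have h2 : (N : ℚ) = ((c i).den : ℚ) * (k : ℚ) := by exact_mod_cast hk
    push_cast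
    rw [h2, ← hden]
    ring
  choose z hzz using hz
  refine ⟨N, hNpos, ?_⟩
  have key : N • x = ∑ i, z i • χ i := by
    apply intCast_injective d
    funext j
    have hxj : ((x j : ℤ) : ℚ) = ∑ i, c i * ((χ i j : ℤ) : ℚ) := by
      have h0 := congrFun hc j
      simp only [Finset.sum_apply, Pi.smul_apply, smul_eq_mul] at h0
      exact h0.symm
    show (((N • x) j : ℤ) : ℚ) = (((∑ i, z i • χ i) j : ℤ) : ℚ)
    push_cast [Finset.sum_apply, Pi.smul_apply, smul_eq_mul, nsmul_eq_mul]
    rw [hxj, Finset.mul_sum]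
    refine Finset.sum_congr rfl fun i _ => ?_
    rw [← mul_assoc, ← hzz i]
  rw [key]
  exact AddSubgroup.sum_mem _ (fun i _ =>
    AddSubgroup.zsmul_mem _ (AddSubgroup.subset_closure (Set.mem_range_self i)) _)

lemma multA_ne_zero : multA d r χ ≠ 0 := by
  haveI hfg : AddGroup.FG (↥(satA d r χ)) := by
    have h1 : Module.Finite ℤ (AddSubgroup.toIntSubmodule (satA d r χ)) := inferInstance
    have h2 : AddGroup.FG (AddSubgroup.toIntSubmodule (satA d r χ)) :=
      Module.Finite.iff_addGroup_fg.mp h1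
    exact h2
  haveI hfgq : AddGroup.FG ((↥(satA d r χ)) ⧸ (latA d r χ).addSubgroupOf (satA d r χ)) :=
    AddGroup.fg_of_surjective (f := QuotientAddGroup.mk' _) (QuotientAddGroup.mk'_surjective _)
  have htor : AddMonoid.IsTorsion
      ((↥(satA d r χ)) ⧸ (latA d r χ).addSubgroupOf (satA d r χ)) := by
    intro y
    induction y using QuotientAddGroup.induction_on with
    | _ x =>
      obtain ⟨N, hNp, hmem⟩ := exists_nsmul_mem d r χ x.1 x.2
      refine isOfFinAddOrder_iff_nsmul_eq_zero.mpr ⟨N, hNp, ?_⟩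
      have h1 : (QuotientAddGroup.mk' ((latA d r χ).addSubgroupOf (satA d r χ))) (N • x)
          = N • (QuotientAddGroup.mk' ((latA d r χ).addSubgroupOf (satA d r χ))) x :=
        map_nsmul _ N x
      show N • (QuotientAddGroup.mk' ((latA d r χ).addSubgroupOf (satA d r χ))) x = 0
      rw [← h1]
      exact (QuotientAddGroup.eq_zero_iff _).mpr (AddSubgroup.mem_addSubgroupOf.mpr hmem)
  haveI hfin : Finite ((↥(satA d r χ)) ⧸ (latA d r χ).addSubgroupOf (satA d r χ)) :=
    AddCommGroup.finite_of_fg_torsion _ htor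
  show ((latA d r χ).addSubgroupOf (satA d r χ)).index ≠ 0
  rw [AddSubgroup.index_eq_card]
  exact Nat.card_pos.ne'

lemma multA_nsmul_mem (x : Fin d → ℤ) (hx : x ∈ satA d r χ) :
    multA d r χ • x ∈ latA d r χ := by
  have h := AddSubgroup.nsmul_index_mem ((latA d r χ).addSubgroupOf (satA d r χ))
    (⟨x, hx⟩ : ↥(satA d r χ))
  exact AddSubgroup.mem_addSubgroupOf.mp h

lemma latA_relIndex_smul (hind : LinearIndependent ℚ (fun i => Qv d (χ i)))
    (m : ℕ) (hm : m ≠ 0) :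
    ((latA d r χ).map (DistribMulAction.toAddMonoidHom (Fin d → ℤ) ((m : ℤ)))).relIndex
      (latA d r χ) = m ^ r := by
  have hQ : LinearIndependent ℤ (fun i => Qv d (χ i)) :=
    hind.restrict_scalars (by
      intro a b h
      have h' : ((a : ℤ) : ℚ) = ((b : ℤ) : ℚ) := by simpa using h
      exact_mod_cast h')
  have hZ : LinearIndependent ℤ χ := by
    refine LinearIndependent.of_comp (intCastHom d).toIntLinearMap ?_
    exact hQ
  have hEq : Submodule.span ℤ (Set.range χ) = AddSubgroup.toIntSubmodule (latA d r χ) := by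
    ext x
    change _ ↔ x ∈ latA d r χ
    rw [latA, ← Submodule.span_int_eq_addSubgroupClosure]
    rfl
  exact relIndex_smul_of_basis _ hm ((Module.Basis.span hZ).map (LinearEquiv.ofEq _ _ hEq))

lemma satA_relIndex_smul (hind : LinearIndependent ℚ (fun i => Qv d (χ i))) :
    ((satA d r χ).map (DistribMulAction.toAddMonoidHom (Fin d → ℤ)
      ((multA d r χ : ℤ)))).relIndex (satA d r χ) = multA d r χ ^ r := by
  set m : ℕ := multA d r χ with hm
  have hm0 : m ≠ 0 := multA_ne_zero d r χ
  set μZ : (Fin d → ℤ) →+ (Fin d → ℤ) :=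
    DistribMulAction.toAddMonoidHom (Fin d → ℤ) ((m : ℤ)) with hμZ
  have hμZinj : Function.Injective μZ := by
    intro a b h
    exact smul_right_injective (Fin d → ℤ) (by exact_mod_cast hm0) h
  set Lg := latA d r χ with hLg
  set Sg := satA d r χ with hSg
  have hLS : Lg ≤ Sg := latA_le_satA d r χ
  have hmSL : Sg.map μZ ≤ Lg := by
    rintro _ ⟨x, hx, rfl⟩
    show (m : ℤ) • x ∈ Lg
    rw [natCast_zsmul]
    exact multA_nsmul_mem d r χ x hx
  have hmLmS : Lg.map μZ ≤ Sg.map μZ := AddSubgroup.map_mono hLS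
  have hmSS : Sg.map μZ ≤ Sg := le_trans hmSL hLS
  have towerA : (Lg.map μZ).relIndex (Sg.map μZ) * (Sg.map μZ).relIndex Sg
      = (Lg.map μZ).relIndex Sg :=
    AddSubgroup.relIndex_mul_relIndex _ _ _ hmLmS hmSS
  have towerB : (Lg.map μZ).relIndex Lg * Lg.relIndex Sg = (Lg.map μZ).relIndex Sg :=
    AddSubgroup.relIndex_mul_relIndex _ _ _ (le_trans hmLmS hmSL) hLS
  have hmap : (Lg.map μZ).relIndex (Sg.map μZ) = m := by
    rw [relIndex_map_inj μZ hμZinj]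
    rfl
  have hbasis : (Lg.map μZ).relIndex Lg = m ^ r := latA_relIndex_smul d r χ hind m hm0
  have hLSm : Lg.relIndex Sg = m := rfl
  have hEq : (Lg.map μZ).relIndex (Sg.map μZ) * ((Sg.map μZ).relIndex Sg) = m ^ r * m := by
    rw [towerA, ← towerB, hbasis, hLSm]
  rw [hmap, mul_comm (m ^ r) m] at hEq
  exact Nat.eq_of_mul_eq_mul_left (Nat.pos_of_ne_zero hm0) hEq

lemma int_index (hind : LinearIndependent ℚ (fun i => Qv d (χ i))) (hr : 1 ≤ r) :
    ((satA d r χ).map (DistribMulAction.toAddMonoidHom (Fin d → ℤ)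
      ((multA d r χ : ℤ)))).relIndex (latA d r χ) = multA d r χ ^ (r - 1) := by
  set m : ℕ := multA d r χ with hm
  have hm0 : m ≠ 0 := multA_ne_zero d r χ
  set μZ : (Fin d → ℤ) →+ (Fin d → ℤ) :=
    DistribMulAction.toAddMonoidHom (Fin d → ℤ) ((m : ℤ)) with hμZ
  set Lg := latA d r χ with hLg
  set Sg := satA d r χ with hSg
  have hmSL : Sg.map μZ ≤ Lg := by
    rintro _ ⟨x, hx, rfl⟩
    show (m : ℤ) • x ∈ Lg
    rw [natCast_zsmul]
    exact multA_nsmul_mem d r χ x hx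
  have tower : (Sg.map μZ).relIndex Lg * Lg.relIndex Sg = (Sg.map μZ).relIndex Sg :=
    AddSubgroup.relIndex_mul_relIndex _ _ _ hmSL (latA_le_satA d r χ)
  have hLSm : Lg.relIndex Sg = m := rfl
  have hsat : (Sg.map μZ).relIndex Sg = m ^ r := satA_relIndex_smul d r χ hind
  have hEq : (Sg.map μZ).relIndex Lg * m = m ^ (r - 1) * m := by
    have e1 : (Sg.map μZ).relIndex Lg * m = m ^ r := by
      rw [← hsat, ← tower, hLSm]
    rw [e1]
    rw [← pow_succ, Nat.sub_add_cancel hr]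
  exact Nat.eq_of_mul_eq_mul_right (Nat.pos_of_ne_zero hm0) hEq

end Main

end Stmt14Aux

open Stmt14Aux AddSubgroup Set in
/-- Proposition `ex:sepind`, covering degree computation.
Let `χ_1,…,χ_r ∈ ℤ^d` (r ≥ 1) be `ℚ`-linearly independent, with `Λ_A` their `ℤ`-span,
`Λ^A` its saturation and `m = [Λ^A : Λ_A]`.  If `Γ ⊆ ℤ^d` is a complement of `Λ^A`
(`Λ^A ∩ Γ = 0`, `Λ^A + Γ = ℤ^d`) and `Λ(A) ⊆ ℚ^d` is generated by `Γ` and the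
vectors `χ_i / m`, then `ℤ^d ⊆ Λ(A)` and `[Λ(A) : ℤ^d] = m^{r−1}`. -/
theorem stmt_14 (d r : ℕ) (hr : 1 ≤ r) (χ : Fin r → Fin d → ℤ)
    (hind : LinearIndependent ℚ (fun i => Qv d (χ i)))
    (Γ : AddSubgroup (Fin d → ℤ))
    (hmeet : satA d r χ ⊓ Γ = ⊥)
    (hjoin : satA d r χ ⊔ Γ = ⊤) :
    (∀ v : Fin d → ℤ, Qv d v ∈ LamA d r χ Γ) ∧
      (intLat d).relIndex (LamA d r χ Γ) = multA d r χ ^ (r - 1) := by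
  classical
  set m : ℕ := multA d r χ with hm
  have hm0 : m ≠ 0 := multA_ne_zero d r χ
  have hmQ : (m : ℚ) ≠ 0 := by exact_mod_cast hm0
  set ι : (Fin d → ℤ) →+ (Fin d → ℚ) := intCastHom d with hι
  set μZ : (Fin d → ℤ) →+ (Fin d → ℤ) :=
    DistribMulAction.toAddMonoidHom (Fin d → ℤ) ((m : ℤ)) with hμZ
  set μi : (Fin d → ℚ) →+ (Fin d → ℚ) :=
    DistribMulAction.toAddMonoidHom (Fin d → ℚ) ((m : ℚ)⁻¹) with hμi
  have hμiinj : Function.Injective μi := by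
    intro a b h
    exact smul_right_injective (Fin d → ℚ) (inv_ne_zero hmQ) h
  set Lg := latA d r χ with hLg
  set Sg := satA d r χ with hSg
  set Lm : AddSubgroup (Fin d → ℚ) := (Lg.map ι).map μi with hLm
  -- decomposition of LamA
  have hLamdec : LamA d r χ Γ = Γ.map ι ⊔ Lm := by
    rw [LamA, AddSubgroup.closure_union]
    congr 1
    · rw [qv_eq, ← AddMonoidHom.map_closure, AddSubgroup.closure_eq]
    · have h1 : (Set.range fun i => ((multA d r χ : ℚ))⁻¹ • Qv d (χ i))
          = ⇑μi '' (⇑ι '' Set.range χ) := by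
        rw [← Set.image_comp, ← Set.range_comp]
        rfl
      rw [h1, ← AddMonoidHom.map_closure, ← AddMonoidHom.map_closure]
      rfl
  -- decomposition of the integer lattice
  have hZ : intLat d = Sg.map ι ⊔ Γ.map ι := by
    rw [intLat, AddMonoidHom.range_eq_map, ← hjoin, AddSubgroup.map_sup]
  -- `Sg.map ι ≤ Lm`
  have hSL : Sg.map ι ≤ Lm := by
    rintro _ ⟨x, hx, rfl⟩
    refine AddSubgroup.mem_map.mpr ⟨ι (m • x), ?_, ?_⟩
    · exact AddSubgroup.mem_map.mpr ⟨m • x, multA_nsmul_mem d r χ x hx, rfl⟩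
    · show (m : ℚ)⁻¹ • ι (m • x) = ι x
      rw [map_nsmul, ← Nat.cast_smul_eq_nsmul ℚ, smul_smul, inv_mul_cancel₀ hmQ, one_smul]
  have hZle : intLat d ≤ LamA d r χ Γ := by
    rw [hZ, hLamdec]
    exact sup_le (le_trans hSL le_sup_right) le_sup_left
  refine ⟨fun v => hZle ⟨v, rfl⟩, ?_⟩
  -- `Lm` lies inside the rational span
  have hLV : Lg.map ι ≤ (Submodule.span ℚ (Set.range fun i => Qv d (χ i))).toAddSubgroup := by
    rw [hLg, latA, AddMonoidHom.map_closure]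
    refine (AddSubgroup.closure_le _).mpr ?_
    rintro _ ⟨_, ⟨i, rfl⟩, rfl⟩
    exact Submodule.subset_span ⟨i, rfl⟩
  have hLmV : Lm ≤ (Submodule.span ℚ (Set.range fun i => Qv d (χ i))).toAddSubgroup := by
    rintro _ ⟨w, hw, rfl⟩
    show (m : ℚ)⁻¹ • w ∈ Submodule.span ℚ (Set.range fun i => Qv d (χ i))
    exact Submodule.smul_mem _ _ (hLV hw)
  -- the key intersection computation
  have hinf : intLat d ⊓ Lm = Sg.map ι := by
    apply le_antisymm
    · rintro x ⟨hxZ, hxL⟩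
      obtain ⟨y, rfl⟩ := hxZ
      refine AddSubgroup.mem_map.mpr ⟨y, ?_, rfl⟩
      show ι y ∈ (Submodule.span ℚ (Set.range fun i => Qv d (χ i))).toAddSubgroup
      exact hLmV hxL
    · refine le_inf ?_ hSL
      rw [hZ]
      exact le_sup_left
  -- `LamA = Lm ⊔ intLat`
  have hLamZ : LamA d r χ Γ = Lm ⊔ intLat d := by
    apply le_antisymm
    · rw [hLamdec]
      refine sup_le (le_trans ?_ le_sup_right) le_sup_left
      rw [hZ]
      exact le_sup_right
    · refine sup_le ?_ hZle
      rw [hLamdec]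
      exact le_sup_right
  -- rewrite `Sg.map ι` as an image under `μi`
  have hS'eq : Sg.map ι = ((Sg.map μZ).map ι).map μi := by
    rw [AddSubgroup.map_map, AddSubgroup.map_map]
    congr 1
    refine AddMonoidHom.ext fun x => ?_
    symm
    show (m : ℚ)⁻¹ • ι ((m : ℤ) • x) = ι x
    rw [map_zsmul, ← Int.cast_smul_eq_zsmul ℚ, smul_smul]
    push_cast
    rw [inv_mul_cancel₀ hmQ, one_smul]
  calc (intLat d).relIndex (LamA d r χ Γ)
      = (intLat d).relIndex (Lm ⊔ intLat d) := by rw [hLamZ]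
    _ = (intLat d).relIndex Lm := AddSubgroup.relIndex_sup_right _ _
    _ = (intLat d ⊓ Lm).relIndex Lm := (AddSubgroup.inf_relIndex_right _ _).symm
    _ = (Sg.map ι).relIndex Lm := by rw [hinf]
    _ = (((Sg.map μZ).map ι).map μi).relIndex ((Lg.map ι).map μi) := by rw [← hS'eq, hLm]
    _ = ((Sg.map μZ).map ι).relIndex (Lg.map ι) := relIndex_map_inj μi hμiinj _ _
    _ = (Sg.map μZ).relIndex Lg := relIndex_map_inj ι (intCast_injective d) _ _
    _ = multA d r χ ^ (r - 1) := int_index d r χ hind hr
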